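/- arXiv:1907.01157 — 2 statements merged into one kernel-verified Lean document; each statement's English description precedes it below -/
import Mathlib

section
/- Let Δ := exp_q((a/(q − q⁻¹))ψ)·exp_{q⁻¹}(−(a⁻¹/(q − q⁻¹))ψ). Then for 0 ≤ i ≤ d, both (Δ − I)W_i ⊆ W_0 + W_1 + ⋯ + W_{i−1} and (Δ⁻¹ − I)W_i ⊆ W_0 + W_1 + ⋯ + W_{i−1}, where Δ⁻¹ = exp_q((a⁻¹/(q − q⁻¹))ψ)·exp_{q⁻¹}(−(a/(q − q⁻¹))ψ). -/
noncomputable def qNum {𝕂 : Type*} [Field 𝕂] (q : 𝕂) (n : ℕ) : 𝕂 :=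
  (q ^ n - q⁻¹ ^ n) / (q - q⁻¹)

noncomputable def qFact {𝕂 : Type*} [Field 𝕂] (q : 𝕂) (n : ℕ) : 𝕂 :=
  ∏ j ∈ Finset.range n, qNum q (j + 1)

noncomputable def qExp {𝕂 : Type*} [Field 𝕂] {V : Type*} [AddCommGroup V] [Module 𝕂 V]
    (q : 𝕂) (N : ℕ) (T : Module.End 𝕂 V) : Module.End 𝕂 V :=
  ∑ n ∈ Finset.range N, (q ^ (n * (n - 1) / 2) / qFact q n) • T ^ n

noncomputable def qExpInv {𝕂 : Type*} [Field 𝕂] {V : Type*} [AddCommGroup V] [Module 𝕂 V]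
    (q : 𝕂) (N : ℕ) (T : Module.End 𝕂 V) : Module.End 𝕂 V :=
  ∑ n ∈ Finset.range N, (q⁻¹ ^ (n * (n - 1) / 2) / qFact q n) • T ^ n

/-!
Write `[n]` for `qNum q n`. The identity `[k + l] = q ^ l [k] + q⁻¹ ^ k [l]` gives the recursion
`[m + 1] c (m + 1) = (q ^ m - q⁻¹ ^ m) c m` for the coefficients `c m` of
`exp_q X * exp_{q⁻¹} (-X)`, so `c m = 0` for `1 ≤ m ≤ d`. As `ψ ^ (d + 1) = 0`, this makes
`exp_{q⁻¹} (-T)` inverse to `exp_q T` for every multiple `T` of `ψ`, which gives `Δ⁻¹`.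

Next, `(I - a⁻¹ q ψ) 𝓜 = K`, so `𝓜 ψ = q² ψ 𝓜` and `ψ W_i ⊆ W_{i-1}`. A `q ^ d`-eigenvector
of `𝓜` is killed by `K - q ^ d (I - a⁻¹ q ψ)`, which is triangular with respect to the flag
`U_0 ⊆ U_0 + U_1 ⊆ ⋯` with diagonal entries `q ^ (d - 2 i) - q ^ d`, nonzero for `i ≥ 1`; hence
it lies in `U_0` and `ψ` kills it. So `ψ` maps `W_i` into `W_0 + ⋯ + W_{i-1}`, and so does
`Δ - I`, a polynomial in `ψ` without constant term.
-/

open Finset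

section QNumbers

variable {𝕂 : Type*} [Field 𝕂]

theorem qNum_inv (q : 𝕂) (n : ℕ) : qNum q⁻¹ n = qNum q n := by
  rw [qNum, qNum, inv_inv, ← neg_sub q, ← neg_sub (q ^ n), neg_div_neg_eq]

theorem qFact_inv (q : 𝕂) (n : ℕ) : qFact q⁻¹ n = qFact q n := by
  simp only [qFact, qNum_inv]

theorem qNum_add (q : 𝕂) (k l : ℕ) :
    qNum q (k + l) = q ^ l * qNum q k + q⁻¹ ^ k * qNum q l := by
  simp only [qNum]
  ring

theorem pow_sub_inv_pow_ne_zero {q : 𝕂} (hq : q ≠ 0) {n : ℕ} (h : q ^ (2 * n) ≠ 1) :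
    q ^ n - q⁻¹ ^ n ≠ 0 := by
  intro h0
  apply h
  rw [two_mul, pow_add]
  nth_rw 2 [sub_eq_zero.mp h0]
  rw [← mul_pow, mul_inv_cancel₀ hq, one_pow]

theorem qNum_ne_zero {q : 𝕂} (hq : q ≠ 0) (h1 : q ^ 2 ≠ 1) {n : ℕ} (h : q ^ (2 * n) ≠ 1) :
    qNum q n ≠ 0 :=
  div_ne_zero (pow_sub_inv_pow_ne_zero hq h) (by simpa using pow_sub_inv_pow_ne_zero hq (n := 1) h1)

theorem zpow_sub_two_mul_ne_zpow {q : 𝕂} (hq : q ≠ 0) {i : ℕ} (h : q ^ (2 * i) ≠ 1) (d : ℤ) :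
    q ^ (d - 2 * (i : ℤ)) ≠ q ^ d := by
  intro heq
  apply h
  rw [← zpow_natCast, show ((2 * i : ℕ) : ℤ) = d - (d - 2 * (i : ℤ)) by push_cast; ring,
    zpow_sub₀ hq, heq, div_self (zpow_ne_zero _ hq)]

theorem sq_mul_zpow_sub_two_mul_succ {q : 𝕂} (hq : q ≠ 0) (d : ℤ) (j : ℕ) :
    q ^ 2 * q ^ (d - 2 * ((j + 1 : ℕ) : ℤ)) = q ^ (d - 2 * (j : ℤ)) := by
  rw [← zpow_natCast, ← zpow_add₀ hq]
  congr 1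
  push_cast
  ring

end QNumbers

section QExponential

open PowerSeries

variable {𝕂 : Type*} [Field 𝕂]

noncomputable def qExpCoeff (q : 𝕂) (n : ℕ) : 𝕂 := q ^ (n * (n - 1) / 2) / qFact q n

noncomputable def qExpSeries (q : 𝕂) : PowerSeries 𝕂 := PowerSeries.mk (qExpCoeff q)

theorem qNum_mul_qExpCoeff_succ {q : 𝕂} {n : ℕ} (h : qNum q (n + 1) ≠ 0) :
    qNum q (n + 1) * qExpCoeff q (n + 1) = q ^ n * qExpCoeff q n := by
  rw [qExpCoeff, qExpCoeff, qFact, prod_range_succ, ← qFact, Nat.triangle_succ, pow_add]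
  field_simp

theorem qNum_mul_coeff_qExpSeries_mul_succ {q : 𝕂} {m : ℕ}
    (hnum : ∀ j, 1 ≤ j → j ≤ m + 1 → qNum q j ≠ 0) :
    qNum q (m + 1) * coeff (m + 1) (qExpSeries q * rescale (-1) (qExpSeries q⁻¹)) =
      (q ^ m - q⁻¹ ^ m) * coeff m (qExpSeries q * rescale (-1) (qExpSeries q⁻¹)) := by
  have hcoeff : ∀ n, coeff n (qExpSeries q * rescale (-1) (qExpSeries q⁻¹)) =
      ∑ p ∈ antidiagonal n, qExpCoeff q p.1 * ((-1) ^ p.2 * qExpCoeff q⁻¹ p.2) := by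
    simp [coeff_mul, coeff_rescale, qExpSeries]
  have hsplit : ∀ p ∈ antidiagonal (m + 1),
      qNum q (m + 1) * (qExpCoeff q p.1 * ((-1) ^ p.2 * qExpCoeff q⁻¹ p.2)) =
        q ^ p.2 * (qNum q p.1 * qExpCoeff q p.1 * ((-1) ^ p.2 * qExpCoeff q⁻¹ p.2)) +
          q⁻¹ ^ p.1 * (qExpCoeff q p.1 * ((-1) ^ p.2 * (qNum q⁻¹ p.2 * qExpCoeff q⁻¹ p.2))) := by
    intro p hp
    rw [← mem_antidiagonal.mp hp, qNum_add, qNum_inv]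
    ring
  have hleft : ∀ p ∈ antidiagonal m,
      q ^ p.2 * (qNum q (p.1 + 1) * qExpCoeff q (p.1 + 1) * ((-1) ^ p.2 * qExpCoeff q⁻¹ p.2)) =
        q ^ m * (qExpCoeff q p.1 * ((-1) ^ p.2 * qExpCoeff q⁻¹ p.2)) := by
    intro p hp
    have hp' := hnum (p.1 + 1) (by omega) (by have := mem_antidiagonal.mp hp; omega)
    rw [← mem_antidiagonal.mp hp, qNum_mul_qExpCoeff_succ hp', pow_add]
    ring
  have hright : ∀ p ∈ antidiagonal m,
      q⁻¹ ^ p.1 * (qExpCoeff q p.1 *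
        ((-1) ^ (p.2 + 1) * (qNum q (p.2 + 1) * qExpCoeff q⁻¹ (p.2 + 1)))) =
        -(q⁻¹ ^ m * (qExpCoeff q p.1 * ((-1) ^ p.2 * qExpCoeff q⁻¹ p.2))) := by
    intro p hp
    have hp' : qNum q⁻¹ (p.2 + 1) ≠ 0 := by
      rw [qNum_inv]
      exact hnum _ (by omega) (by have := mem_antidiagonal.mp hp; omega)
    rw [← qNum_inv, ← mem_antidiagonal.mp hp, qNum_mul_qExpCoeff_succ hp', pow_add]
    ring
  have hzero : qNum q 0 = 0 := by simp [qNum]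
  rw [hcoeff, hcoeff, mul_sum, sum_congr rfl hsplit, sum_add_distrib, Nat.sum_antidiagonal_succ,
    Nat.sum_antidiagonal_succ']
  simp only [hzero, qNum_inv, zero_mul, mul_zero, zero_add]
  rw [sum_congr rfl hleft, sum_congr rfl hright, sum_neg_distrib, ← mul_sum, ← mul_sum]
  ring

theorem coeff_qExpSeries_mul {q : 𝕂} {m : ℕ} (hnum : ∀ j, 1 ≤ j → j ≤ m → qNum q j ≠ 0) :
    coeff m (qExpSeries q * rescale (-1) (qExpSeries q⁻¹)) = coeff m 1 := by
  induction m with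
  | zero => simp [coeff_mul, coeff_rescale, qExpSeries, qExpCoeff, qFact]
  | succ m ih =>
    have hm : (q ^ m - q⁻¹ ^ m) * coeff m (qExpSeries q * rescale (-1) (qExpSeries q⁻¹)) = 0 := by
      rcases Nat.eq_zero_or_pos m with rfl | hm
      · simp
      · rw [ih fun j hj hjm => hnum j hj (by omega), coeff_one, if_neg hm.ne', mul_zero]
    rw [coeff_one, if_neg m.succ_ne_zero]
    exact (mul_eq_zero.mp ((qNum_mul_coeff_qExpSeries_mul_succ hnum).trans hm)).resolve_left
      (hnum _ le_add_self le_rfl)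

theorem trunc_qExpSeries_mul {q : 𝕂} {N : ℕ} (hnum : ∀ j, 1 ≤ j → j ≤ N → qNum q j ≠ 0) :
    trunc (N + 1) (qExpSeries q * rescale (-1) (qExpSeries q⁻¹)) = 1 := by
  rw [← trunc_one N]
  ext m
  simp only [coeff_trunc]
  split_ifs with hm
  · exact coeff_qExpSeries_mul fun j hj hjm => hnum j hj (by omega)
  · rfl

end QExponential

section Truncation

open PowerSeries Polynomial

variable {R A : Type*} [CommRing R] [Ring A] [Algebra R A] {T : A} {N : ℕ}

theorem aeval_trunc_coe (hT : T ^ N = 0) (p : R[X]) :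
    aeval T (trunc N (p : PowerSeries R)) = aeval T p := by
  obtain ⟨r, hr⟩ : Polynomial.X ^ N ∣ p - trunc N (p : PowerSeries R) :=
    X_pow_dvd_iff.2 fun m hm => by simp [coeff_trunc, hm]
  rw [← sub_eq_zero, ← map_sub, ← neg_sub, hr, map_neg, map_mul, map_pow, aeval_X, hT, zero_mul,
    neg_zero]

theorem aeval_trunc_mul (hT : T ^ N = 0) (φ χ : PowerSeries R) :
    aeval T (trunc N (φ * χ)) = aeval T (trunc N φ) * aeval T (trunc N χ) := by
  rw [← trunc_trunc_mul_trunc, ← Polynomial.coe_mul, aeval_trunc_coe hT, map_mul]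

end Truncation

section QExpOperator

open PowerSeries Polynomial

variable {𝕂 V : Type*} [Field 𝕂] [AddCommGroup V] [Module 𝕂 V]

theorem qExpInv_eq_qExp (q : 𝕂) (N : ℕ) (T : Module.End 𝕂 V) : qExpInv q N T = qExp q⁻¹ N T := by
  simp only [qExpInv, qExp, qFact_inv]

theorem qExp_smul_eq_aeval_trunc (q c : 𝕂) (N : ℕ) (T : Module.End 𝕂 V) :
    qExp q N (c • T) = aeval T (trunc N (rescale c (qExpSeries q))) := by
  rw [aeval_def, eval₂_trunc_eq_sum_range, qExp]
  refine sum_congr rfl fun n _ => ?_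
  rw [coeff_rescale, qExpSeries, coeff_mk, qExpCoeff, ← Algebra.smul_def, _root_.smul_pow,
    smul_smul, mul_comm]

theorem qExp_mul_qExp_inv_neg {q : 𝕂} {N : ℕ} (hnum : ∀ j, 1 ≤ j → j ≤ N → qNum q j ≠ 0)
    {T : Module.End 𝕂 V} (hT : T ^ (N + 1) = 0) :
    qExp q (N + 1) T * qExp q⁻¹ (N + 1) (-T) = 1 := by
  rw [← one_smul 𝕂 T, ← neg_smul, qExp_smul_eq_aeval_trunc, qExp_smul_eq_aeval_trunc,
    ← aeval_trunc_mul hT, rescale_one, RingHom.id_apply, trunc_qExpSeries_mul hnum, map_one]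

theorem qExp_mul_qExpInv_mul_qExp_mul_qExpInv {q : 𝕂} {N : ℕ}
    (hnum : ∀ j, 1 ≤ j → j ≤ N → qNum q j ≠ 0) {T : Module.End 𝕂 V} (hT : T ^ (N + 1) = 0)
    (x y : 𝕂) :
    qExp q (N + 1) (x • T) * qExpInv q (N + 1) (-(y • T)) *
      (qExp q (N + 1) (y • T) * qExpInv q (N + 1) (-(x • T))) = 1 := by
  have hnil : ∀ c : 𝕂, (c • T) ^ (N + 1) = 0 := fun c => by rw [_root_.smul_pow, hT, smul_zero]
  have hmid : qExp q⁻¹ (N + 1) (-(y • T)) * qExp q (N + 1) (y • T) = 1 := by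
    simpa using qExp_mul_qExp_inv_neg (q := q⁻¹) (T := -(y • T)) (by simpa [qNum_inv] using hnum)
      (by rw [← neg_smul]; exact hnil (-y))
  rw [qExpInv_eq_qExp, qExpInv_eq_qExp, mul_assoc, ← mul_assoc (qExp q⁻¹ _ _), hmid, one_mul,
    qExp_mul_qExp_inv_neg hnum (hnil x)]

end QExpOperator

section SumRange

variable {R V : Type*} [Semiring R] [AddCommMonoid V] [Module R V] {W : ℕ → Submodule R V}

theorem sum_range_le_of_forall_le {p : Submodule R V} {k : ℕ} (h : ∀ j < k, W j ≤ p) :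
    ∑ j ∈ range k, W j ≤ p :=
  sum_induction _ (· ≤ p) (fun _ _ => sup_le) bot_le fun j hj => h j (mem_range.1 hj)

theorem le_sum_range {j k : ℕ} (h : j < k) : W j ≤ ∑ i ∈ range k, W i :=
  single_le_sum (fun _ _ => zero_le) (mem_range.2 h)

end SumRange

section Lowering

open Polynomial

variable {R V : Type*} [CommRing R] [AddCommGroup V] [Module R V] {W : ℕ → Submodule R V}
  {ψ : Module.End R V} {n : ℕ}

theorem le_comap_sum_range_of_lowering (h0 : W 0 ≤ LinearMap.ker ψ)
    (hsucc : ∀ j < n, W (j + 1) ≤ (W j).comap ψ) {i : ℕ} (hi : i ≤ n) :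
    W i ≤ (∑ j ∈ range i, W j).comap ψ := by
  cases i with
  | zero => simpa using h0
  | succ j => exact (hsucc j hi).trans (Submodule.comap_mono (le_sum_range j.lt_succ_self))

theorem sum_range_le_comap_of_lowering (h0 : W 0 ≤ LinearMap.ker ψ)
    (hsucc : ∀ j < n, W (j + 1) ≤ (W j).comap ψ) {i : ℕ} (hi : i ≤ n + 1) :
    ∑ j ∈ range i, W j ≤ (∑ j ∈ range i, W j).comap ψ :=
  sum_range_le_of_forall_le fun j hj =>
    (le_comap_sum_range_of_lowering h0 hsucc (by omega)).trans
      (Submodule.comap_mono (sum_le_sum_of_subset (range_subset_range.2 hj.le)))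

theorem map_aeval_sub_one_le_of_lowering (h0 : W 0 ≤ LinearMap.ker ψ)
    (hsucc : ∀ j < n, W (j + 1) ≤ (W j).comap ψ) {p : R[X]} (hp : p.coeff 0 = 1) {i : ℕ}
    (hi : i ≤ n) : (W i).map (aeval ψ p - 1) ≤ ∑ j ∈ range i, W j := by
  rintro _ ⟨v, hv, rfl⟩
  have hψv : ψ v ∈ ∑ j ∈ range i, W j := le_comap_sum_range_of_lowering h0 hsucc hi hv
  have hsplit : (aeval ψ p - 1) v = aeval ψ p.divX (ψ v) := by
    conv_lhs => rw [← divX_mul_X_add p]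
    simp [hp]
  rw [hsplit]
  exact aeval_apply_smul_mem_of_le_comap hψv _ _
    (sum_range_le_comap_of_lowering h0 hsucc (by omega))

end Lowering

theorem map_qExp_mul_qExpInv_sub_one_le_of_lowering {𝕂 V : Type*} [Field 𝕂] [AddCommGroup V]
    [Module 𝕂 V] {W : ℕ → Submodule 𝕂 V} {ψ : Module.End 𝕂 V} {n : ℕ}
    (h0 : W 0 ≤ LinearMap.ker ψ) (hsucc : ∀ j < n, W (j + 1) ≤ (W j).comap ψ)
    (q x y : 𝕂) (N : ℕ) {i : ℕ} (hi : i ≤ n) :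
    (W i).map (qExp q (N + 1) (x • ψ) * qExpInv q (N + 1) (-(y • ψ)) - 1) ≤
      ∑ j ∈ range i, W j := by
  rw [qExpInv_eq_qExp, ← neg_smul, qExp_smul_eq_aeval_trunc, qExp_smul_eq_aeval_trunc, ← map_mul]
  refine map_aeval_sub_one_le_of_lowering h0 hsucc ?_ hi
  simp [PowerSeries.coeff_trunc, PowerSeries.coeff_rescale, qExpSeries, qExpCoeff, qFact]

section Triangular

variable {𝕂 V : Type*} [Field 𝕂] [AddCommGroup V] [Module 𝕂 V] {U : ℕ → Submodule 𝕂 V}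
  {A : Module.End 𝕂 V} {c : ℕ → 𝕂}

theorem mem_sum_range_of_apply_eq_zero {k : ℕ}
    (hA : ∀ j ≤ k, ∀ u ∈ U j, A u - c j • u ∈ ∑ i ∈ range j, U i)
    (hdisj : Disjoint (U k) (∑ i ∈ range k, U i)) (hc : c k ≠ 0) {v : V}
    (hv : v ∈ ∑ i ∈ range (k + 1), U i) (hAv : A v = 0) : v ∈ ∑ i ∈ range k, U i := by
  have hAF : ∑ i ∈ range k, U i ≤ (∑ i ∈ range k, U i).comap A := by
    refine sum_range_le_of_forall_le fun j hj u hu => ?_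
    rw [Submodule.mem_comap, ← sub_add_cancel (A u) (c j • u)]
    exact add_mem (sum_le_sum_of_subset (f := U) (range_subset_range.2 hj.le) (hA j hj.le u hu))
      (Submodule.smul_mem _ _ (le_sum_range hj hu))
  rw [sum_range_succ, Submodule.add_eq_sup, Submodule.mem_sup] at hv
  obtain ⟨w, hw, u, hu, rfl⟩ := hv
  have hcu : c k • u ∈ ∑ i ∈ range k, U i := by
    have : c k • u = -A w - (A u - c k • u) := by
      rw [map_add, add_eq_zero_iff_eq_neg] at hAv
      rw [hAv]
      abel
    rw [this]
    exact sub_mem (neg_mem (hAF hw)) (hA k le_rfl u hu)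
  rw [Submodule.smul_mem_iff _ hc] at hcu
  rw [Submodule.disjoint_def.mp hdisj u hu hcu, add_zero]
  exact hw

theorem mem_sum_range_of_triangular {m n : ℕ}
    (hA : ∀ j < n, ∀ u ∈ U j, A u - c j • u ∈ ∑ i ∈ range j, U i)
    (hdisj : ∀ j < n, Disjoint (U j) (∑ i ∈ range j, U i)) (hc : ∀ j, m ≤ j → j < n → c j ≠ 0)
    (hmn : m ≤ n) {v : V} (hv : v ∈ ∑ i ∈ range n, U i) (hAv : A v = 0) :
    v ∈ ∑ i ∈ range m, U i := by
  induction n, hmn using Nat.le_induction with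
  | base => exact hv
  | succ n hmn ih =>
    exact ih (fun j hj => hA j (by omega)) (fun j hj => hdisj j (by omega))
      (fun j hmj hj => hc j hmj (by omega))
      (mem_sum_range_of_apply_eq_zero (fun j hj => hA j (by omega)) (hdisj n (by omega))
        (hc n hmn (by omega)) hv hAv)

end Triangular

section Internal

variable {R V : Type*} [Ring R] [AddCommGroup V] [Module R V] {U : ℕ → Submodule R V} {n : ℕ}

theorem DirectSum.IsInternal.disjoint_sum_range
    (h : DirectSum.IsInternal fun i : Fin (n + 1) => U i) {j : ℕ} (hj : j ≤ n) :
    Disjoint (U j) (∑ i ∈ range j, U i) := by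
  refine (h.submodule_iSupIndep.disjoint_biSup (x := ⟨j, by omega⟩) (y := {i | i.1 < j})
    (by simp)).mono_right (sum_range_le_of_forall_le fun i hi => ?_)
  exact le_biSup (fun i : Fin (n + 1) => U i)
    (show (⟨i, by omega⟩ : Fin (n + 1)) ∈ {i | i.1 < j} from hi)

theorem DirectSum.IsInternal.sum_range_eq_top
    (h : DirectSum.IsInternal fun i : Fin (n + 1) => U i) : ∑ i ∈ range (n + 1), U i = ⊤ :=
  eq_top_iff.2 <| h.submodule_iSup_eq_top.ge.trans <| iSup_le fun i => le_sum_range i.isLt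

end Internal

section Operators

variable {𝕂 A : Type*} [Field 𝕂] [Ring A] [Algebra 𝕂 A]

theorem one_sub_smul_mul_eq {a q : 𝕂} (ha : a - a⁻¹ ≠ 0) {ψ K B M : A}
    (hG : IsUnit (1 - (a⁻¹ * q) • ψ))
    (hB : B = (1 - (a * q) • ψ) * Ring.inverse (1 - (a⁻¹ * q) • ψ) * K)
    (hM : M = (a - a⁻¹)⁻¹ • (a • K - a⁻¹ • B)) : (1 - (a⁻¹ * q) • ψ) * M = K := by
  set G := 1 - (a⁻¹ * q) • ψ
  set H := 1 - (a * q) • ψ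
  have hGH : Commute G H :=
    (Commute.one_left _).sub_left ((Commute.one_right _).sub_right
      (((Commute.refl ψ).smul_left _).smul_right _))
  have hGB : G * B = H * K := by
    rw [hB, ← mul_assoc, ← mul_assoc, hGH.eq, mul_assoc H, Ring.mul_inverse_cancel G hG, mul_one]
  have hlin : a • G - a⁻¹ • H = (a - a⁻¹) • 1 := by
    simp only [G, H]
    module
  rw [hM, mul_smul_comm, mul_sub, mul_smul_comm, mul_smul_comm, hGB, ← smul_mul_assoc,
    ← smul_mul_assoc, ← sub_mul, hlin, smul_mul_assoc, one_mul, smul_smul, inv_mul_cancel₀ ha,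
    one_smul]

theorem mul_eq_smul_mul_of_mul_eq {c : 𝕂} {G M K ψ : A} (hG : IsUnit G) (hGψ : Commute G ψ)
    (hGM : G * M = K) (hK : K * ψ = c • (ψ * K)) : M * ψ = c • (ψ * M) :=
  hG.mul_left_cancel <| by
    rw [← mul_assoc, hGM, hK, ← hGM, ← mul_assoc, ← hGψ.eq, mul_assoc, mul_smul_comm]

end Operators

section Eigenspaces

variable {𝕂 V : Type*} [Field 𝕂] [AddCommGroup V] [Module 𝕂 V]

theorem eigenspace_le_comap_eigenspace_of_mul_eq {c : 𝕂} {M ψ : Module.End 𝕂 V}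
    (h : M * ψ = c • (ψ * M)) (μ : 𝕂) : M.eigenspace μ ≤ (M.eigenspace (c * μ)).comap ψ := by
  intro v hv
  rw [Submodule.mem_comap, Module.End.mem_eigenspace_iff] at *
  rw [← Module.End.mul_apply, h, LinearMap.smul_apply, Module.End.mul_apply, hv, map_smul,
    smul_smul]

theorem eigenspace_le_of_one_sub_smul_mul_eq {d : ℕ} {U : ℕ → Submodule 𝕂 V}
    (hU : DirectSum.IsInternal fun i : Fin (d + 1) => U i) {K ψ M : Module.End 𝕂 V} {μ : ℕ → 𝕂}
    (hKU : ∀ i ≤ d, ∀ v ∈ U i, K v = μ i • v)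
    (hψU : ∀ i ≤ d, U i ≤ (∑ j ∈ range i, U j).comap ψ) (hμ : ∀ i, 1 ≤ i → i ≤ d → μ i ≠ μ 0)
    {c : 𝕂} (hM : (1 - c • ψ) * M = K) : M.eigenspace (μ 0) ≤ U 0 := by
  intro v hv
  rw [Module.End.mem_eigenspace_iff] at hv
  have hAv : (K - μ 0 • (1 - c • ψ)) v = 0 := by
    rw [← hM, LinearMap.sub_apply, Module.End.mul_apply, hv, map_smul, LinearMap.smul_apply,
      sub_self]
  have hA : ∀ j < d + 1, ∀ u ∈ U j,
      (K - μ 0 • (1 - c • ψ)) u - (μ j - μ 0) • u ∈ ∑ i ∈ range j, U i := by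
    intro j hj u hu
    have : (K - μ 0 • (1 - c • ψ)) u - (μ j - μ 0) • u = (μ 0 * c) • ψ u := by
      simp only [LinearMap.sub_apply, LinearMap.smul_apply, Module.End.one_apply,
        hKU j (by omega) u hu]
      module
    rw [this]
    exact Submodule.smul_mem _ _ (hψU j (by omega) hu)
  simpa using mem_sum_range_of_triangular hA (fun j hj => hU.disjoint_sum_range (by omega))
    (fun j hj hjd => sub_ne_zero.2 (hμ j hj (by omega))) (by omega)
    (by simp [hU.sum_range_eq_top]) hAv

end Eigenspaces

theorem stmt_15_general
    {𝕂 : Type*} [Field 𝕂] {V : Type*} [AddCommGroup V] [Module 𝕂 V]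
    (d : ℕ) (hd : 1 ≤ d) (q a : 𝕂) (hq : q ≠ 0) (ha : a ≠ 0)
    (hq2 : ∀ i : ℕ, 1 ≤ i → i ≤ d → q ^ (2 * i) ≠ 1)
    (ha2 : ∀ i : ℤ, 1 - (d : ℤ) ≤ i → i ≤ (d : ℤ) - 1 → a ^ 2 ≠ q ^ (2 * i))
    (K : Module.End 𝕂 V)
    (U : ℕ → Submodule 𝕂 V)
    (hUint : DirectSum.IsInternal (fun i : Fin (d + 1) => U i.1))
    (hKU : ∀ i, i ≤ d → ∀ v ∈ U i, K v = (q ^ ((d : ℤ) - 2 * (i : ℤ))) • v)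
    (ψ : Module.End 𝕂 V)
    (hψ0 : ∀ v ∈ U 0, ψ v = 0)
    (hψU : ∀ i, 1 ≤ i → i ≤ d → ∀ v ∈ U i, ψ v ∈ U (i - 1))
    (hψnil : ψ ^ (d + 1) = 0)
    (hKψ : K * ψ = q ^ 2 • (ψ * K))
    (hinv : ∀ x : 𝕂, IsUnit (1 - x • ψ))
    (B : Module.End 𝕂 V)
    (hB : B = (1 - (a * q) • ψ) * Ring.inverse (1 - (a⁻¹ * q) • ψ) * K)
    (M : Module.End 𝕂 V)
    (hM : M = (a - a⁻¹)⁻¹ • (a • K - a⁻¹ • B)):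
    qExp q (d + 1) ((a / (q - q⁻¹)) • ψ) * qExpInv q (d + 1) (-((a⁻¹ / (q - q⁻¹)) • ψ)) *
      (qExp q (d + 1) ((a⁻¹ / (q - q⁻¹)) • ψ) * qExpInv q (d + 1) (-((a / (q - q⁻¹)) • ψ))) = 1 ∧
    qExp q (d + 1) ((a⁻¹ / (q - q⁻¹)) • ψ) * qExpInv q (d + 1) (-((a / (q - q⁻¹)) • ψ)) *
      (qExp q (d + 1) ((a / (q - q⁻¹)) • ψ) * qExpInv q (d + 1) (-((a⁻¹ / (q - q⁻¹)) • ψ))) = 1 ∧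
    ∀ i, i ≤ d →
      Submodule.map
        (qExp q (d + 1) ((a / (q - q⁻¹)) • ψ) * qExpInv q (d + 1) (-((a⁻¹ / (q - q⁻¹)) • ψ)) - 1)
        (Module.End.eigenspace M (q ^ ((d : ℤ) - 2 * (i : ℤ)))) ≤ (∑ j ∈ Finset.range i, Module.End.eigenspace M (q ^ ((d : ℤ) - 2 * (j : ℤ)))) ∧
      Submodule.map
        (qExp q (d + 1) ((a⁻¹ / (q - q⁻¹)) • ψ) * qExpInv q (d + 1) (-((a / (q - q⁻¹)) • ψ)) - 1)
        (Module.End.eigenspace M (q ^ ((d : ℤ) - 2 * (i : ℤ)))) ≤ ∑ j ∈ Finset.range i, Module.End.eigenspace M (q ^ ((d : ℤ) - 2 * (j : ℤ))) := by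
  set μ : ℕ → 𝕂 := fun i => q ^ ((d : ℤ) - 2 * (i : ℤ)) with hμ
  have hnum : ∀ j, 1 ≤ j → j ≤ d → qNum q j ≠ 0 := fun j hj hjd =>
    qNum_ne_zero hq (hq2 1 le_rfl hd) (hq2 j hj hjd)
  have ha1 : a - a⁻¹ ≠ 0 := by
    simpa using pow_sub_inv_pow_ne_zero ha (n := 1) (by simpa using ha2 0 (by omega) (by omega))
  have hGM := one_sub_smul_mul_eq ha1 (hinv _) hB hM
  have hMψ : M * ψ = q ^ 2 • (ψ * M) := mul_eq_smul_mul_of_mul_eq (hinv _)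
    ((Commute.one_left ψ).sub_left ((Commute.refl ψ).smul_left _)) hGM hKψ
  have hU0 : U 0 ≤ LinearMap.ker ψ := fun v hv => hψ0 v hv
  have hUlower : ∀ i ≤ d, U i ≤ (∑ j ∈ range i, U j).comap ψ := fun i =>
    le_comap_sum_range_of_lowering hU0
      fun j hj v hv => by simpa using hψU (j + 1) (by omega) (by omega) v hv
  have hW0 : M.eigenspace (μ 0) ≤ LinearMap.ker ψ :=
    (eigenspace_le_of_one_sub_smul_mul_eq hUint hKU hUlower
      (fun i hi hid => by simpa [hμ] using zpow_sub_two_mul_ne_zpow hq (hq2 i hi hid) d) hGM).trans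
      hU0
  have hWsucc : ∀ j < d, M.eigenspace (μ (j + 1)) ≤ (M.eigenspace (μ j)).comap ψ := fun j _ => by
    simpa only [hμ, sq_mul_zpow_sub_two_mul_succ hq] using
      eigenspace_le_comap_eigenspace_of_mul_eq hMψ (μ (j + 1))
  exact ⟨qExp_mul_qExpInv_mul_qExp_mul_qExpInv hnum hψnil _ _,
    qExp_mul_qExpInv_mul_qExp_mul_qExpInv hnum hψnil _ _, fun i hi =>
      ⟨map_qExp_mul_qExpInv_sub_one_le_of_lowering (W := fun i => M.eigenspace (μ i)) hW0 hWsucc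
        _ _ _ _ hi,
      map_qExp_mul_qExpInv_sub_one_le_of_lowering (W := fun i => M.eigenspace (μ i)) hW0 hWsucc
        _ _ _ _ hi⟩⟩

theorem stmt_15
    {𝕂 : Type*} [Field 𝕂] {V : Type*} [AddCommGroup V] [Module 𝕂 V]
    [FiniteDimensional 𝕂 V]
    (d : ℕ) (hd : 1 ≤ d) (q a : 𝕂) (hq : q ≠ 0) (ha : a ≠ 0)
    (hq2 : ∀ i : ℕ, 1 ≤ i → i ≤ d → q ^ (2 * i) ≠ 1)
    (ha2 : ∀ i : ℤ, 1 - (d : ℤ) ≤ i → i ≤ (d : ℤ) - 1 → a ^ 2 ≠ q ^ (2 * i))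
    (K : Module.End 𝕂 V) (hK : IsUnit K)
    (U : ℕ → Submodule 𝕂 V)
    (hUne : ∀ i, i ≤ d → U i ≠ ⊥)
    (hUint : DirectSum.IsInternal (fun i : Fin (d + 1) => U i.1))
    (hKU : ∀ i, i ≤ d → ∀ v ∈ U i, K v = (q ^ ((d : ℤ) - 2 * (i : ℤ))) • v)
    (ψ : Module.End 𝕂 V)
    (hψ0 : ∀ v ∈ U 0, ψ v = 0)
    (hψU : ∀ i, 1 ≤ i → i ≤ d → ∀ v ∈ U i, ψ v ∈ U (i - 1))
    (hψnil : ψ ^ (d + 1) = 0)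
    (hKψ : K * ψ = q ^ 2 • (ψ * K))
    (hinv : ∀ x : 𝕂, IsUnit (1 - x • ψ))
    (B : Module.End 𝕂 V)
    (hB : B = (1 - (a * q) • ψ) * Ring.inverse (1 - (a⁻¹ * q) • ψ) * K)
    (M : Module.End 𝕂 V)
    (hM : M = (a - a⁻¹)⁻¹ • (a • K - a⁻¹ • B))
    (hMunit : IsUnit M):
    qExp q (d + 1) ((a / (q - q⁻¹)) • ψ) * qExpInv q (d + 1) (-((a⁻¹ / (q - q⁻¹)) • ψ)) *
      (qExp q (d + 1) ((a⁻¹ / (q - q⁻¹)) • ψ) * qExpInv q (d + 1) (-((a / (q - q⁻¹)) • ψ))) = 1 ∧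
    qExp q (d + 1) ((a⁻¹ / (q - q⁻¹)) • ψ) * qExpInv q (d + 1) (-((a / (q - q⁻¹)) • ψ)) *
      (qExp q (d + 1) ((a / (q - q⁻¹)) • ψ) * qExpInv q (d + 1) (-((a⁻¹ / (q - q⁻¹)) • ψ))) = 1 ∧
    ∀ i, i ≤ d →
      Submodule.map
        (qExp q (d + 1) ((a / (q - q⁻¹)) • ψ) * qExpInv q (d + 1) (-((a⁻¹ / (q - q⁻¹)) • ψ)) - 1)
        (Module.End.eigenspace M (q ^ ((d : ℤ) - 2 * (i : ℤ)))) ≤ (∑ j ∈ Finset.range i, Module.End.eigenspace M (q ^ ((d : ℤ) - 2 * (j : ℤ)))) ∧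
      Submodule.map
        (qExp q (d + 1) ((a⁻¹ / (q - q⁻¹)) • ψ) * qExpInv q (d + 1) (-((a / (q - q⁻¹)) • ψ)) - 1)
        (Module.End.eigenspace M (q ^ ((d : ℤ) - 2 * (i : ℤ)))) ≤ ∑ j ∈ Finset.range i, Module.End.eigenspace M (q ^ ((d : ℤ) - 2 * (j : ℤ))) :=
  stmt_15_general d hd q a hq ha hq2 ha2 K U hUint hKU ψ hψ0 hψU hψnil hKψ hinv B hB M hM
end

section
/- For 0 ≤ i ≤ d, both (𝓜⁻¹ − q^{2i−d}I)U_i ⊆ U_{i−1} and (𝓜⁻¹ − q^{2i−d}I)U_i^↓ ⊆ U_{i−1}^↓. -/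
/-!
Since `a (I - a⁻¹qψ) - a⁻¹ (I - aqψ) = (a - a⁻¹) I`, the definitions of `B` and `𝓜` give
`𝓜 = (I - a⁻¹qψ)⁻¹ K = (I - aqψ)⁻¹ B`. Hence `𝓜⁻¹ = K⁻¹ - a⁻¹q K⁻¹ψ = B⁻¹ - aq B⁻¹ψ`.
On `U_i` (resp. `U_i^↓`) the operator `K⁻¹` (resp. `B⁻¹`) acts as `q^{2i-d}` and preserves the
decomposition, while `ψ` lowers the index by one.
-/

open scoped Ring

namespace Module.End

variable {𝕂 V : Type*} [Field 𝕂] [AddCommGroup V] [Module 𝕂 V]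

theorem ringInverse_apply_eq_inv_smul {C : Module.End 𝕂 V} (hC : IsUnit C) {c : 𝕂} (hc : c ≠ 0)
    {v : V} (h : C v = c • v) : C⁻¹ʳ v = c⁻¹ • v := by
  rw [← inv_smul_smul₀ hc (C⁻¹ʳ v), ← map_smul, ← h, ← mul_apply, Ring.inverse_mul_cancel _ hC,
    one_apply]

theorem map_ringInverse_mul_sub_smul_le (d : ℕ) (μ : ℕ → 𝕂) (hμ : ∀ i ≤ d, μ i ≠ 0)
    {C ψ : Module.End 𝕂 V} (hC : IsUnit C) (c : 𝕂) (U : ℕ → Submodule 𝕂 V)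
    (hCU : ∀ i ≤ d, ∀ v ∈ U i, C v = μ i • v)
    (hψ0 : ∀ v ∈ U 0, ψ v = 0) (hψU : ∀ i, 1 ≤ i → i ≤ d → ∀ v ∈ U i, ψ v ∈ U (i - 1))
    {i : ℕ} (hi : i ≤ d) :
    Submodule.map (C⁻¹ʳ * (1 - c • ψ) - (μ i)⁻¹ • 1) (U i)
      ≤ if i = 0 then ⊥ else U (i - 1) := by
  rintro _ ⟨v, hv, rfl⟩
  have hCv := ringInverse_apply_eq_inv_smul hC (hμ i hi) (hCU i hi v hv)
  have hval : (C⁻¹ʳ * (1 - c • ψ) - (μ i)⁻¹ • 1) v = -c • C⁻¹ʳ (ψ v) := by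
    simp only [LinearMap.sub_apply, mul_apply, LinearMap.smul_apply, one_apply, map_sub, map_smul,
      hCv]
    rw [sub_sub_cancel_left, neg_smul]
  rw [hval]
  split_ifs with h0
  · subst h0
    rw [Submodule.mem_bot, hψ0 v hv, map_zero, smul_zero]
  · have hψv : ψ v ∈ U (i - 1) := hψU i (Nat.one_le_iff_ne_zero.2 h0) hi v hv
    rw [ringInverse_apply_eq_inv_smul hC (hμ _ (by omega)) (hCU _ (by omega) _ hψv)]
    exact Submodule.smul_mem _ _ (Submodule.smul_mem _ _ hψv)

end Module.End

theorem inv_smul_sub_smul_mul_ringInverse_mul_eq {𝕂 R : Type*} [Field 𝕂] [Ring R]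
    [Algebra 𝕂 R] {a : 𝕂} (ha : a - a⁻¹ ≠ 0) (x : 𝕂) {ψ : R} (hE : IsUnit (1 - (a⁻¹ * x) • ψ))
    (K : R) :
    (a - a⁻¹)⁻¹ • (a • K - a⁻¹ • ((1 - (a * x) • ψ) * (1 - (a⁻¹ * x) • ψ)⁻¹ʳ * K))
      = (1 - (a⁻¹ * x) • ψ)⁻¹ʳ * K := by
  set E := 1 - (a⁻¹ * x) • ψ
  have hcomb : a • E - a⁻¹ • (1 - (a * x) • ψ) = (a - a⁻¹) • (1 : R) := by
    simp only [E, smul_sub, smul_smul, mul_left_comm a a⁻¹ x, sub_smul]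
    abel
  clear_value E
  generalize 1 - (a * x) • ψ = F at hcomb ⊢
  calc (a - a⁻¹)⁻¹ • (a • K - a⁻¹ • (F * E⁻¹ʳ * K))
      = (a - a⁻¹)⁻¹ • ((a • E - a⁻¹ • F) * E⁻¹ʳ * K) := by
        rw [sub_mul, sub_mul, smul_mul_assoc, smul_mul_assoc, smul_mul_assoc, smul_mul_assoc,
          Ring.mul_inverse_cancel _ hE, one_mul]
    _ = E⁻¹ʳ * K := by
        rw [hcomb, smul_mul_assoc, smul_mul_assoc, smul_smul, inv_mul_cancel₀ ha, one_smul,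
          one_mul]

theorem stmt_19_general
    {𝕂 : Type*} [Field 𝕂] {V : Type*} [AddCommGroup V] [Module 𝕂 V]
    (d : ℕ) (hd : 1 ≤ d) (q a : 𝕂) (hq : q ≠ 0) (ha : a ≠ 0)
    (ha2 : ∀ i : ℤ, 1 - (d : ℤ) ≤ i → i ≤ (d : ℤ) - 1 → a ^ 2 ≠ q ^ (2 * i))
    (K : Module.End 𝕂 V) (hK : IsUnit K)
    (U : ℕ → Submodule 𝕂 V)
    (hKU : ∀ i, i ≤ d → ∀ v ∈ U i, K v = (q ^ ((d : ℤ) - 2 * (i : ℤ))) • v)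
    (ψ : Module.End 𝕂 V)
    (hψ0 : ∀ v ∈ U 0, ψ v = 0)
    (hψU : ∀ i, 1 ≤ i → i ≤ d → ∀ v ∈ U i, ψ v ∈ U (i - 1))
    (hinv : ∀ x : 𝕂, IsUnit (1 - x • ψ))
    (B : Module.End 𝕂 V)
    (hB : B = (1 - (a * q) • ψ) * Ring.inverse (1 - (a⁻¹ * q) • ψ) * K)
    (M : Module.End 𝕂 V)
    (hM : M = (a - a⁻¹)⁻¹ • (a • K - a⁻¹ • B))
    (Ud : ℕ → Submodule 𝕂 V)
    (hBUd : ∀ i, i ≤ d → ∀ v ∈ Ud i, B v = (q ^ ((d : ℤ) - 2 * (i : ℤ))) • v)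
    (hψ0d : ∀ v ∈ Ud 0, ψ v = 0)
    (hψUd : ∀ i, 1 ≤ i → i ≤ d → ∀ v ∈ Ud i, ψ v ∈ Ud (i - 1)):
    ∀ i, i ≤ d →
      Submodule.map (Ring.inverse M - (q ^ (2 * (i : ℤ) - (d : ℤ))) • 1) (U i)
        ≤ (if i = 0 then ⊥ else U (i - 1)) ∧
      Submodule.map (Ring.inverse M - (q ^ (2 * (i : ℤ) - (d : ℤ))) • 1) (Ud i)
        ≤ (if i = 0 then ⊥ else Ud (i - 1)) := by
  have ha' : a - a⁻¹ ≠ 0 := by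
    have hsq : a ^ 2 ≠ 1 := by simpa using ha2 0 (by omega) (by omega)
    rw [sub_ne_zero]
    exact fun h => hsq (by field_simp at h; exact h)
  have hME : M = (1 - (a⁻¹ * q) • ψ)⁻¹ʳ * K := by
    rw [hM, hB, inv_smul_sub_smul_mul_ringInverse_mul_eq ha' q (hinv _)]
  have hMF : M = (1 - (a * q) • ψ)⁻¹ʳ * B := by
    rw [hB, mul_assoc, Ring.inverse_mul_cancel_left _ _ (hinv _), hME]
  have hBunit : IsUnit B := hB ▸ ((hinv _).mul (hinv _).ringInverse).mul hK
  have hμ (j : ℕ) (_ : j ≤ d) : q ^ ((d : ℤ) - 2 * (j : ℤ)) ≠ 0 := zpow_ne_zero _ hq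
  intro i hi
  have hexp : q ^ (2 * (i : ℤ) - d) = (q ^ ((d : ℤ) - 2 * (i : ℤ)))⁻¹ := by
    rw [← zpow_neg, neg_sub]
  constructor
  · rw [hME, Ring.inverse_mul (.inr hK), Ring.inverse_inverse (hinv _), hexp]
    exact Module.End.map_ringInverse_mul_sub_smul_le d _ hμ hK _ U hKU hψ0 hψU hi
  · rw [hMF, Ring.inverse_mul (.inl (hinv _).ringInverse), Ring.inverse_inverse (hinv _), hexp]
    exact Module.End.map_ringInverse_mul_sub_smul_le d _ hμ hBunit _ Ud hBUd hψ0d hψUd hi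

theorem stmt_19
    {𝕂 : Type*} [Field 𝕂] {V : Type*} [AddCommGroup V] [Module 𝕂 V]
    [FiniteDimensional 𝕂 V]
    (d : ℕ) (hd : 1 ≤ d) (q a : 𝕂) (hq : q ≠ 0) (ha : a ≠ 0)
    (hq2 : ∀ i : ℕ, 1 ≤ i → i ≤ d → q ^ (2 * i) ≠ 1)
    (ha2 : ∀ i : ℤ, 1 - (d : ℤ) ≤ i → i ≤ (d : ℤ) - 1 → a ^ 2 ≠ q ^ (2 * i))
    (K : Module.End 𝕂 V) (hK : IsUnit K)
    (U : ℕ → Submodule 𝕂 V)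
    (hUne : ∀ i, i ≤ d → U i ≠ ⊥)
    (hUint : DirectSum.IsInternal (fun i : Fin (d + 1) => U i.1))
    (hKU : ∀ i, i ≤ d → ∀ v ∈ U i, K v = (q ^ ((d : ℤ) - 2 * (i : ℤ))) • v)
    (ψ : Module.End 𝕂 V)
    (hψ0 : ∀ v ∈ U 0, ψ v = 0)
    (hψU : ∀ i, 1 ≤ i → i ≤ d → ∀ v ∈ U i, ψ v ∈ U (i - 1))
    (hψnil : ψ ^ (d + 1) = 0)
    (hKψ : K * ψ = q ^ 2 • (ψ * K))
    (hinv : ∀ x : 𝕂, IsUnit (1 - x • ψ))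
    (B : Module.End 𝕂 V)
    (hB : B = (1 - (a * q) • ψ) * Ring.inverse (1 - (a⁻¹ * q) • ψ) * K)
    (M : Module.End 𝕂 V)
    (hM : M = (a - a⁻¹)⁻¹ • (a • K - a⁻¹ • B))
    (hMunit : IsUnit M)
    (Ud : ℕ → Submodule 𝕂 V)
    (hUdne : ∀ i, i ≤ d → Ud i ≠ ⊥)
    (hUdint : DirectSum.IsInternal (fun i : Fin (d + 1) => Ud i.1))
    (hBUd : ∀ i, i ≤ d → ∀ v ∈ Ud i, B v = (q ^ ((d : ℤ) - 2 * (i : ℤ))) • v)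
    (hψ0d : ∀ v ∈ Ud 0, ψ v = 0)
    (hψUd : ∀ i, 1 ≤ i → i ≤ d → ∀ v ∈ Ud i, ψ v ∈ Ud (i - 1)):
    ∀ i, i ≤ d →
      Submodule.map (Ring.inverse M - (q ^ (2 * (i : ℤ) - (d : ℤ))) • 1) (U i)
        ≤ (if i = 0 then ⊥ else U (i - 1)) ∧
      Submodule.map (Ring.inverse M - (q ^ (2 * (i : ℤ) - (d : ℤ))) • 1) (Ud i)
        ≤ (if i = 0 then ⊥ else Ud (i - 1)) :=
  stmt_19_general d hd q a hq ha ha2 K hK U hKU ψ hψ0 hψU hinv B hB M hM Ud hBUd hψ0d hψUd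
end
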